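/- Let Γ be a well-covered graph with no isolated vertex, let S be a maximal stable set, and let v ∉ S be a vertex with |S ∩ N(v)| = ρ(Γ). If S' is a maximal stable set containing {v} ∪ (S \ N(v)) and W = S' \ (S ∪ {v}), then |S' \ S| = ρ(Γ), |W| = ρ(Γ) − 1, W ∩ N[v] = ∅, and every vertex of W is adjacent to every vertex of S ∩ N(v). -/

import Mathlib

open SimpleGraph

variable {V : Type*}

/-- A set of vertices is stable (independent) if no two of its vertices are adjacent. -/
def SimpleGraph.IsStableSet (G : SimpleGraph V) (s : Set V) : Prop :=
  s.Pairwise fun u v => ¬ G.Adj u v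

/-- A graph is CIS if every maximal clique and every maximal stable set intersect. -/
def SimpleGraph.IsCIS (G : SimpleGraph V) : Prop :=
  ∀ C S : Set V, Maximal G.IsClique C → Maximal G.IsStableSet S → (C ∩ S).Nonempty

/-- `ρ(Γ)`: the minimum over all non-isolated vertices `v` and maximal stable
sets `S` not containing `v` of `|S ∩ N(v)|`. -/
noncomputable def SimpleGraph.rho (G : SimpleGraph V) : ℕ :=
  sInf { k : ℕ | ∃ (v : V) (S : Set V), (G.neighborSet v).Nonempty ∧
    Maximal G.IsStableSet S ∧ v ∉ S ∧ (S ∩ G.neighborSet v).ncard = k }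

/-!
Let `S'` be a maximal stable set containing `v` and `S \ N(v)`. Since `v ∈ S'`, the set `S'` meets
`S` exactly in `S \ N(v)`, so well-coveredness gives `|S' \ S| = |S ∩ N(v)| = ρ`. If some
`w ∈ S' \ (S ∪ {v})` missed some `u ∈ S ∩ N(v)`, then `(S \ N(v)) ∪ {u, w}` would be stable; a
maximal stable set `T` containing it avoids `v` (it contains the neighbour `u`), so
`|T| ≥ |S \ N(v)| + 1 + |T ∩ N(v)| ≥ |S \ N(v)| + 1 + ρ = |S| + 1`, contradicting well-coveredness.
-/

namespace SimpleGraph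

def IsWellCovered (G : SimpleGraph V) : Prop :=
  ∀ s t : Set V, Maximal G.IsStableSet s → Maximal G.IsStableSet t → s.ncard = t.ncard

variable {G : SimpleGraph V} {s t : Set V} {u v w : V}

theorem IsStableSet.mono (ht : G.IsStableSet t) (hst : s ⊆ t) : G.IsStableSet s :=
  Set.Pairwise.mono hst ht

theorem isStableSet_insert :
    G.IsStableSet (insert u s) ↔ G.IsStableSet s ∧ ∀ w ∈ s, u ≠ w → ¬ G.Adj u w := by
  simp only [IsStableSet, Set.pairwise_insert, G.adj_comm _ u, and_self]

theorem IsStableSet.exists_maximal_superset (hs : G.IsStableSet s) :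
    ∃ t, s ⊆ t ∧ Maximal G.IsStableSet t := by
  obtain ⟨t, hst, ht⟩ := zorn_subset_nonempty {t : Set V | G.IsStableSet t}
    (fun c hc hchain _ =>
      ⟨⋃₀ c, (Set.pairwise_sUnion hchain.directedOn).2 hc, fun _ => Set.subset_sUnion_of_mem⟩)
    s hs
  exact ⟨t, hst, ht⟩

theorem IsStableSet.disjoint_neighborSet (hs : G.IsStableSet s) (hv : v ∈ s) :
    Disjoint s (G.neighborSet v) :=
  Set.disjoint_left.2 fun _ hw hvw => hs hv hw hvw.ne hvw

theorem rho_le_ncard_inter_neighborSet (hT : Maximal G.IsStableSet t) (hvT : v ∉ t)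
    (hv : (G.neighborSet v).Nonempty) : G.rho ≤ (t ∩ G.neighborSet v).ncard :=
  Nat.sInf_le ⟨v, t, hv, hT, hvT, rfl⟩

theorem exists_maximal_ncard_add_rho_le [Finite V] (hvu : G.Adj v u)
    (hs : G.IsStableSet (insert u s)) (hsv : Disjoint s (G.neighborSet v)) :
    ∃ t, Maximal G.IsStableSet t ∧ s.ncard + G.rho ≤ t.ncard := by
  obtain ⟨t, hst, ht⟩ := hs.exists_maximal_superset
  have hut : u ∈ t := hst (Set.mem_insert u s)
  have hvt : v ∉ t := fun hvt => ht.prop hvt hut hvu.ne hvu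
  have hs_le : s.ncard ≤ (t \ G.neighborSet v).ncard :=
    Set.ncard_le_ncard fun x hx =>
      ⟨hst (Set.mem_insert_of_mem u hx), Set.disjoint_left.1 hsv hx⟩
  have hrho := rho_le_ncard_inter_neighborSet ht hvt ⟨u, hvu⟩
  have hsplit := Set.ncard_inter_add_ncard_sdiff_eq_ncard t (G.neighborSet v)
  exact ⟨t, ht, by omega⟩

theorem IsWellCovered.adj_of_mem_inter_neighborSet [Finite V] (hwc : G.IsWellCovered)
    (hs : Maximal G.IsStableSet s) (hρ : (s ∩ G.neighborSet v).ncard = G.rho)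
    (ht : G.IsStableSet t) (hst : s \ G.neighborSet v ⊆ t) (hwt : w ∈ t) (hws : w ∉ s)
    (hwv : w ∉ G.neighborSet v) (hu : u ∈ s ∩ G.neighborSet v) : G.Adj w u := by
  by_contra hwu
  have hstable : G.IsStableSet (insert u (insert w (s \ G.neighborSet v))) := by
    rw [Set.insert_comm]
    refine isStableSet_insert.2 ⟨hs.prop.mono (Set.insert_subset hu.1 Set.sdiff_subset), ?_⟩
    rintro x (rfl | hx) hwx
    · exact hwu
    · exact ht hwt (hst hx) hwx
  obtain ⟨T, hT, hle⟩ := exists_maximal_ncard_add_rho_le hu.2 hstable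
    (Set.disjoint_insert_left.2 ⟨hwv, Set.disjoint_sdiff_left⟩)
  rw [Set.ncard_insert_of_notMem fun h => hws h.1] at hle
  have hsplit := Set.ncard_inter_add_ncard_sdiff_eq_ncard s (G.neighborSet v)
  have hTs := hwc T s hT hs
  omega

end SimpleGraph

theorem wellCovered_intersection_lemma_general (G : SimpleGraph V) [Fintype V]
    (hwc : ∀ S T : Set V, Maximal G.IsStableSet S → Maximal G.IsStableSet T →
      S.ncard = T.ncard)
    (S : Set V) (hS : Maximal G.IsStableSet S)
    (v : V) (hv : v ∉ S) (hρ : (S ∩ G.neighborSet v).ncard = G.rho)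
    (S' : Set V) (hS' : Maximal G.IsStableSet S')
    (hsub : insert v (S \ G.neighborSet v) ⊆ S')
    (W : Set V) (hW : W = S' \ (S ∪ {v})) :
    (S' \ S).ncard = G.rho ∧
    W.ncard = G.rho - 1 ∧
    W ∩ insert v (G.neighborSet v) = ∅ ∧
    ∀ w ∈ W, ∀ u ∈ S ∩ G.neighborSet v, G.Adj w u := by
  obtain rfl : W = (S' \ S) \ {v} := by rw [hW, Set.sdiff_sdiff]
  have hvS' : v ∈ S' := hsub (Set.mem_insert v _)
  have hS'N : Disjoint S' (G.neighborSet v) := hS'.prop.disjoint_neighborSet hvS'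
  have hS'S : S' ∩ S = S \ G.neighborSet v :=
    Set.Subset.antisymm (fun x hx => ⟨hx.2, Set.disjoint_left.1 hS'N hx.1⟩)
      (fun x hx => ⟨hsub (Set.mem_insert_of_mem v hx), hx.1⟩)
  have hdiff : (S' \ S).ncard = G.rho := by
    have hsplit' := Set.ncard_inter_add_ncard_sdiff_eq_ncard S' S
    have hsplit := Set.ncard_inter_add_ncard_sdiff_eq_ncard S (G.neighborSet v)
    have hcard := hwc S' S hS' hS
    rw [hS'S] at hsplit'
    omega
  refine ⟨hdiff, ?_, ?_, ?_⟩
  · rw [Set.ncard_sdiff_singleton_of_mem (show v ∈ S' \ S from ⟨hvS', hv⟩), hdiff]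
  · refine Set.disjoint_iff_inter_eq_empty.1 (Set.disjoint_insert_right.2 ⟨fun h => h.2 rfl, ?_⟩)
    exact hS'N.mono_left fun x hx => hx.1.1
  · rintro w ⟨⟨hwS', hwS⟩, -⟩ u hu
    exact IsWellCovered.adj_of_mem_inter_neighborSet hwc hS hρ hS'.prop
      (fun x hx => hsub (Set.mem_insert_of_mem v hx)) hwS' hwS (Set.disjoint_left.1 hS'N hwS') hu

theorem wellCovered_intersection_lemma (G : SimpleGraph V) [Fintype V]
    (hwc : ∀ S T : Set V, Maximal G.IsStableSet S → Maximal G.IsStableSet T →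
      S.ncard = T.ncard)
    (hniso : ∀ v : V, (G.neighborSet v).Nonempty)
    (S : Set V) (hS : Maximal G.IsStableSet S)
    (v : V) (hv : v ∉ S) (hρ : (S ∩ G.neighborSet v).ncard = G.rho)
    (S' : Set V) (hS' : Maximal G.IsStableSet S')
    (hsub : insert v (S \ G.neighborSet v) ⊆ S')
    (W : Set V) (hW : W = S' \ (S ∪ {v})) :
    (S' \ S).ncard = G.rho ∧
    W.ncard = G.rho - 1 ∧
    W ∩ insert v (G.neighborSet v) = ∅ ∧
    ∀ w ∈ W, ∀ u ∈ S ∩ G.neighborSet v, G.Adj w u :=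
  wellCovered_intersection_lemma_general G hwc S hS v hv hρ S' hS' hsub W hW
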